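/- Let μ₀, α₀, λ₀, μ₂, α₂, λ₂, κ₀, ν₀, δ₀ ∈ ℝ and define on M₃ the operators C₀ := 2μ₀·sym₀ + 2α₀·skew + (3λ₀+2μ₀)·ℙ, C₂ := 2μ₂·sym₀ + 2α₂·skew + (3λ₂+2μ₂)·ℙ and E := 2κ₀·sym₀ + 2ν₀·skew + (3δ₀+2κ₀)·ℙ. Then the block operator [[C₀, E], [E, C₂]] on M₃ ⊕ M₃ is strictly positive definite if and only if μ₀ > 0, α₀ > 0, λ₀ + (2/3)μ₀ > 0, μ₀μ₂ − κ₀² > 0, α₀α₂ − ν₀² > 0 and (λ₂ + (2/3)μ₂)(λ₀ + (2/3)μ₀) − (δ₀ + (2/3)κ₀)² > 0. -/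

import Mathlib

noncomputable section

open Matrix

/-- The space of real `3 × 3` matrices. -/
abbrev M3 : Type := Matrix (Fin 3) (Fin 3) ℝ

/-- The Frobenius inner product `⟨σ, τ⟩ = trace (σᵀ * τ)` on `M3`. -/
def finner (σ τ : M3) : ℝ := (σᵀ * τ).trace

/-- The symmetric part map `sym τ = (τ + τᵀ)/2`. -/
def symM : M3 →ₗ[ℝ] M3 :=
  (2 : ℝ)⁻¹ • (LinearMap.id + (Matrix.transposeLinearEquiv (Fin 3) (Fin 3) ℝ ℝ).toLinearMap)

/-- The skew-symmetric part map `skew τ = (τ - τᵀ)/2`. -/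
def skewM : M3 →ₗ[ℝ] M3 :=
  (2 : ℝ)⁻¹ • (LinearMap.id - (Matrix.transposeLinearEquiv (Fin 3) (Fin 3) ℝ ℝ).toLinearMap)

/-- The volumetric (pressure) part `ℙ τ = (trace τ / 3) • I`. -/
def volP : M3 →ₗ[ℝ] M3 :=
  (Matrix.traceLinearMap (Fin 3) ℝ ℝ).smulRight ((3 : ℝ)⁻¹ • (1 : M3))

/-- The trace-free symmetric part `sym₀ = sym - ℙ`. -/
def sym0 : M3 →ₗ[ℝ] M3 := symM - volP

/-!
`sym₀`, `skew` and `ℙ` are self-adjoint projections with `sym₀ + skew + ℙ = id` (the Cartan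
decomposition of `M₃`), and `C₀`, `E`, `C₂` are linear combinations of them. So the quadratic form
of `[[C₀, E], [E, C₂]]` at `(x, y)` splits, over the three components `P`, into the binary forms
`a ⟨Px, Px⟩ + 2b ⟨Px, Py⟩ + c ⟨Py, Py⟩` with coefficient matrices `[[2μ₀, 2κ₀], [2κ₀, 2μ₂]]`,
`[[2α₀, 2ν₀], [2ν₀, 2α₂]]` and `[[3λ₀ + 2μ₀, 3δ₀ + 2κ₀], [3δ₀ + 2κ₀, 3λ₂ + 2μ₂]]`. As every
component is nonzero, the block operator is positive definite iff each of these `2 × 2` matrices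
is, i.e. iff `a > 0` and `ac - b² > 0` for each of them.
-/

namespace LinearMap.BilinForm

variable {M : Type*} [AddCommGroup M] [Module ℝ M] (B : LinearMap.BilinForm ℝ M)

/-- The quadratic form of the block operator `[[a, b], [b, c]] ⊗ B` on `M × M`. -/
def blockQuad (a b c : ℝ) (x y : M) : ℝ := a * B x x + 2 * b * B x y + c * B y y

variable {B}

@[simp]
lemma blockQuad_zero (a b c : ℝ) : B.blockQuad a b c 0 0 = 0 := by
  simp [blockQuad]

lemma blockQuad_smul_smul (a b c s t : ℝ) (v : M) :
    B.blockQuad a b c (s • v) (t • v) = (a * s ^ 2 + 2 * b * s * t + c * t ^ 2) * B v v := by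
  simp only [blockQuad, map_smul, LinearMap.smul_apply, smul_eq_mul]
  ring

lemma mul_blockQuad (hB : B.IsSymm) (a b c : ℝ) (x y : M) :
    a * B.blockQuad a b c x y = B (a • x + b • y) (a • x + b • y) + (a * c - b ^ 2) * B y y := by
  simp only [blockQuad, map_add, map_smul, LinearMap.add_apply, LinearMap.smul_apply, smul_eq_mul,
    hB.eq y x]
  ring

lemma blockQuad_pos (hB : B.IsSymm) (hpos : ∀ x, x ≠ 0 → 0 < B x x) {a b c : ℝ} (ha : 0 < a)
    (hd : 0 < a * c - b ^ 2) {x y : M} (hxy : (x, y) ≠ 0) : 0 < B.blockQuad a b c x y := by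
  have hnonneg (z : M) : 0 ≤ B z z := by
    rcases eq_or_ne z 0 with rfl | hz
    · simp
    · exact (hpos z hz).le
  rcases eq_or_ne y 0 with rfl | hy
  · have hx : x ≠ 0 := by simpa using hxy
    simpa [blockQuad] using mul_pos ha (hpos x hx)
  · refine pos_of_mul_pos_right ?_ ha.le
    rw [mul_blockQuad hB]
    exact add_pos_of_nonneg_of_pos (hnonneg _) (mul_pos hd (hpos y hy))

lemma blockQuad_nonneg (hB : B.IsSymm) (hpos : ∀ x, x ≠ 0 → 0 < B x x) {a b c : ℝ} (ha : 0 < a)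
    (hd : 0 < a * c - b ^ 2) (x y : M) : 0 ≤ B.blockQuad a b c x y := by
  by_cases hxy : (x, y) = 0
  · obtain ⟨rfl, rfl⟩ := Prod.mk_eq_zero.1 hxy
    exact (blockQuad_zero a b c).ge
  · exact (blockQuad_pos hB hpos ha hd hxy).le

lemma pos_and_det_pos_of_blockQuad_smul_pos {a b c : ℝ} {v : M} (hv : 0 < B v v)
    (h : ∀ s t : ℝ, (s, t) ≠ 0 → 0 < B.blockQuad a b c (s • v) (t • v)) :
    0 < a ∧ 0 < a * c - b ^ 2 := by
  have hq (s t : ℝ) (hst : (s, t) ≠ 0) : 0 < a * s ^ 2 + 2 * b * s * t + c * t ^ 2 := by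
    have := h s t hst
    rw [blockQuad_smul_smul] at this
    exact pos_of_mul_pos_left this hv.le
  have ha : 0 < a := by simpa using hq 1 0 (by simp)
  -- at `(s, t) = (-b, a)` the binary form takes the value `a * (a * c - b ^ 2)`
  exact ⟨ha, by nlinarith [hq (-b) a (by simp [ha.ne'])]⟩

lemma apply_sum_smul_apply {ι : Type*} [Fintype ι] {P : ι → M →ₗ[ℝ] M}
    (hP : ∀ i x y, B x (P i y) = B (P i x) (P i y)) (a : ι → ℝ) (x y : M) :
    B x ((∑ i, a i • P i) y) = ∑ i, a i * B (P i x) (P i y) := by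
  simp only [LinearMap.sum_apply, LinearMap.smul_apply, map_sum, map_smul, smul_eq_mul]
  exact Finset.sum_congr rfl fun i _ => by rw [hP]

lemma block_eq_sum_blockQuad (hB : B.IsSymm) {ι : Type*} [Fintype ι] {P : ι → M →ₗ[ℝ] M}
    (hP : ∀ i x y, B x (P i y) = B (P i x) (P i y)) (a b c : ι → ℝ) (x y : M) :
    B x ((∑ i, a i • P i) x + (∑ i, b i • P i) y) + B y ((∑ i, b i • P i) x + (∑ i, c i • P i) y) =
      ∑ i, B.blockQuad (a i) (b i) (c i) (P i x) (P i y) := by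
  simp only [map_add, apply_sum_smul_apply hP, blockQuad, ← Finset.sum_add_distrib,
    hB.eq (P _ y) (P _ x)]
  exact Finset.sum_congr rfl fun i _ => by ring

theorem sum_blockQuad_pos_iff (hB : B.IsSymm) (hpos : ∀ x, x ≠ 0 → 0 < B x x)
    {ι : Type*} [Fintype ι] {P : ι → M →ₗ[ℝ] M}
    (hsum : ∀ x, ∑ i, P i x = x) (hwit : ∀ i, ∃ v, P i v ≠ 0 ∧ ∀ j ≠ i, P j v = 0)
    (a b c : ι → ℝ) :
    (∀ p : M × M, p ≠ 0 → 0 < ∑ i, B.blockQuad (a i) (b i) (c i) (P i p.1) (P i p.2)) ↔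
      ∀ i, 0 < a i ∧ 0 < a i * c i - b i ^ 2 := by
  constructor
  · intro h i
    obtain ⟨v, hv, hvanish⟩ := hwit i
    refine pos_and_det_pos_of_blockQuad_smul_pos (hpos _ hv) fun s t hst => ?_
    have hv0 : v ≠ 0 := by rintro rfl; simp at hv
    have := h (s • v, t • v) (by simpa [hv0] using hst)
    rwa [Finset.sum_eq_single i (fun j _ hj => by simp [hvanish j hj]) (by simp),
      map_smul, map_smul] at this
  · intro hcoef p hp
    obtain ⟨i, hi⟩ : ∃ i, (P i p.1, P i p.2) ≠ 0 := by
      by_contra! hzero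
      refine hp (Prod.ext ?_ ?_)
      · rw [← hsum p.1]; simp [fun i => (Prod.mk_eq_zero.1 (hzero i)).1]
      · rw [← hsum p.2]; simp [fun i => (Prod.mk_eq_zero.1 (hzero i)).2]
    exact Finset.sum_pos' (fun j _ => blockQuad_nonneg hB hpos (hcoef j).1 (hcoef j).2 _ _)
      ⟨i, Finset.mem_univ i, blockQuad_pos hB hpos (hcoef i).1 (hcoef i).2 hi⟩

end LinearMap.BilinForm

lemma finner_eq_sum (σ τ : M3) : finner σ τ = ∑ i, ∑ j, σ i j * τ i j := by
  simp only [finner, Matrix.trace, Matrix.diag, Matrix.mul_apply, Matrix.transpose_apply]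
  exact Finset.sum_comm

lemma finner_comm (σ τ : M3) : finner σ τ = finner τ σ := by
  simp only [finner_eq_sum, mul_comm]

lemma finner_self_pos {σ : M3} (hσ : σ ≠ 0) : 0 < finner σ σ := by
  rw [finner, ← conjTranspose_eq_transpose_of_trivial]
  exact (posSemidef_conjTranspose_mul_self σ).trace_nonneg.lt_of_ne'
    (trace_conjTranspose_mul_self_eq_zero_iff.not.2 hσ)

def frobeniusForm : LinearMap.BilinForm ℝ M3 :=
  LinearMap.mk₂ ℝ finner (fun _ _ _ => by simp [finner, Matrix.add_mul])
    (fun _ _ _ => by simp [finner]) (fun _ _ _ => by simp [finner, Matrix.mul_add])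
    (fun _ _ _ => by simp [finner])

@[simp]
lemma frobeniusForm_apply (σ τ : M3) : frobeniusForm σ τ = finner σ τ := rfl

lemma isSymm_frobeniusForm : frobeniusForm.IsSymm := ⟨finner_comm⟩

lemma symM_eq (τ : M3) : symM τ = (2 : ℝ)⁻¹ • (τ + τᵀ) := rfl

lemma skewM_eq (τ : M3) : skewM τ = (2 : ℝ)⁻¹ • (τ - τᵀ) := rfl

lemma symM_apply (τ : M3) (i j : Fin 3) : symM τ i j = (τ i j + τ j i) / 2 := by
  simp only [symM_eq, Matrix.smul_apply, Matrix.add_apply, transpose_apply, smul_eq_mul]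
  ring

lemma skewM_apply (τ : M3) (i j : Fin 3) : skewM τ i j = (τ i j - τ j i) / 2 := by
  simp only [skewM_eq, Matrix.smul_apply, Matrix.sub_apply, transpose_apply, smul_eq_mul]
  ring

lemma volP_apply (τ : M3) (i j : Fin 3) : volP τ i j = τ.trace / 3 * (1 : M3) i j := by
  simp only [volP, LinearMap.coe_smulRight, traceLinearMap_apply, Matrix.smul_apply, smul_eq_mul]
  ring

lemma sym0_apply (τ : M3) (i j : Fin 3) :
    sym0 τ i j = (τ i j + τ j i) / 2 - τ.trace / 3 * (1 : M3) i j := by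
  simp [sym0, symM_apply, volP_apply]

lemma finner_sym0_right (σ τ : M3) : finner σ (sym0 τ) = finner (sym0 σ) (sym0 τ) := by
  simp only [finner_eq_sum, sym0_apply, Matrix.trace, Matrix.diag, Fin.sum_univ_three,
    Matrix.one_apply, Fin.reduceEq, ↓reduceIte]
  ring

lemma finner_skewM_right (σ τ : M3) : finner σ (skewM τ) = finner (skewM σ) (skewM τ) := by
  simp only [finner_eq_sum, skewM_apply, Fin.sum_univ_three]
  ring

lemma finner_volP_right (σ τ : M3) : finner σ (volP τ) = finner (volP σ) (volP τ) := by
  simp only [finner_eq_sum, volP_apply, Matrix.trace, Matrix.diag, Fin.sum_univ_three,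
    Matrix.one_apply, Fin.reduceEq, ↓reduceIte]
  ring

lemma sym0_add_skewM_add_volP (τ : M3) : sym0 τ + skewM τ + volP τ = τ := by
  simp only [sym0, LinearMap.sub_apply, symM_eq, skewM_eq]
  module

section

variable {τ : M3}

lemma symM_of_transpose_eq (h : τᵀ = τ) : symM τ = τ := by
  rw [symM_eq, h]
  module

lemma skewM_of_transpose_eq (h : τᵀ = τ) : skewM τ = 0 := by
  rw [skewM_eq, h, sub_self, smul_zero]

lemma symM_of_transpose_eq_neg (h : τᵀ = -τ) : symM τ = 0 := by
  rw [symM_eq, h, add_neg_cancel, smul_zero]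

lemma skewM_of_transpose_eq_neg (h : τᵀ = -τ) : skewM τ = τ := by
  rw [skewM_eq, h]
  module

lemma trace_eq_zero_of_transpose_eq_neg (h : τᵀ = -τ) : τ.trace = 0 := by
  have := congrArg Matrix.trace h
  rw [trace_transpose, trace_neg] at this
  linarith

lemma volP_of_trace_eq_zero (h : τ.trace = 0) : volP τ = 0 := by
  simp [volP, h]

end

lemma volP_one : volP 1 = 1 := by
  simp [volP, smul_smul]

def cartanProj : Fin 3 → M3 →ₗ[ℝ] M3 := ![sym0, skewM, volP]

def cartanCoeff (μ α lam : ℝ) : Fin 3 → ℝ := ![2 * μ, 2 * α, 3 * lam + 2 * μ]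

lemma hemitropic_eq_sum_cartanProj (μ α lam : ℝ) :
    (2 * μ) • sym0 + (2 * α) • skewM + (3 * lam + 2 * μ) • volP =
      ∑ i, cartanCoeff μ α lam i • cartanProj i := by
  simp [Fin.sum_univ_three, cartanCoeff, cartanProj]

lemma sum_cartanProj_apply (τ : M3) : ∑ i, cartanProj i τ = τ := by
  simpa [cartanProj, Fin.sum_univ_three] using sym0_add_skewM_add_volP τ

lemma finner_cartanProj_right (i : Fin 3) (σ τ : M3) :
    finner σ (cartanProj i τ) = finner (cartanProj i σ) (cartanProj i τ) := by
  fin_cases i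
  exacts [finner_sym0_right σ τ, finner_skewM_right σ τ, finner_volP_right σ τ]

lemma exists_cartanProj_ne_zero (i : Fin 3) :
    ∃ v, cartanProj i v ≠ 0 ∧ ∀ j ≠ i, cartanProj j v = 0 := by
  fin_cases i
  · have hs : (diagonal ![(1 : ℝ), -1, 0])ᵀ = diagonal ![1, -1, 0] := diagonal_transpose _
    have ht : (diagonal ![(1 : ℝ), -1, 0]).trace = 0 := by simp [Fin.sum_univ_three]
    refine ⟨diagonal ![1, -1, 0], ?_, fun j hj => ?_⟩
    · simp [cartanProj, sym0, symM_of_transpose_eq hs, volP_of_trace_eq_zero ht]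
    · fin_cases j <;> simp_all [cartanProj, skewM_of_transpose_eq hs, volP_of_trace_eq_zero ht]
  · set w : M3 := single 0 1 1 - single 1 0 1
    have hs : wᵀ = -w := by simp [w]
    have hvol := volP_of_trace_eq_zero (trace_eq_zero_of_transpose_eq_neg hs)
    refine ⟨w, ?_, fun j hj => ?_⟩
    · change skewM w ≠ 0
      rw [skewM_of_transpose_eq_neg hs]
      exact fun h => by simpa [w] using congrFun (congrFun h 0) 1
    · fin_cases j <;> simp_all [cartanProj, sym0, symM_of_transpose_eq_neg hs]
  · refine ⟨1, by simp [cartanProj, volP_one], fun j hj => ?_⟩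
    fin_cases j <;> simp_all [cartanProj, sym0, symM_of_transpose_eq, skewM_of_transpose_eq,
      volP_one]

lemma cartanCoeff_conditions_iff (μ₀ α₀ lam₀ μ₂ α₂ lam₂ κ₀ ν₀ δ₀ : ℝ) :
    (∀ i, 0 < cartanCoeff μ₀ α₀ lam₀ i ∧
        0 < cartanCoeff μ₀ α₀ lam₀ i * cartanCoeff μ₂ α₂ lam₂ i - cartanCoeff κ₀ ν₀ δ₀ i ^ 2) ↔
      (0 < μ₀ ∧ 0 < α₀ ∧ 0 < lam₀ + (2 / 3) * μ₀ ∧ 0 < μ₀ * μ₂ - κ₀ ^ 2 ∧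
        0 < α₀ * α₂ - ν₀ ^ 2 ∧
        0 < (lam₂ + (2 / 3) * μ₂) * (lam₀ + (2 / 3) * μ₀) - (δ₀ + (2 / 3) * κ₀) ^ 2) := by
  simp only [Fin.forall_fin_succ, IsEmpty.forall_iff, and_true, cartanCoeff, Matrix.cons_val_zero,
    Matrix.cons_val_succ]
  constructor
  · rintro ⟨⟨h1, h2⟩, ⟨h3, h4⟩, h5, h6⟩
    exact ⟨by linarith, by linarith, by linarith, by linarith, by linarith, by linarith⟩
  · rintro ⟨h1, h2, h3, h4, h5, h6⟩
    exact ⟨⟨by linarith, by linarith⟩, ⟨by linarith, by linarith⟩, by linarith, by linarith⟩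

/-- The hemitropic block operator `[[C₀, E], [E, C₂]]` on `M₃ ⊕ M₃`
is strictly positive definite iff `μ₀ > 0`, `α₀ > 0`, `λ₀ + (2/3)μ₀ > 0`,
`μ₀μ₂ - κ₀² > 0`, `α₀α₂ - ν₀² > 0` and
`(λ₂ + (2/3)μ₂)(λ₀ + (2/3)μ₀) - (δ₀ + (2/3)κ₀)² > 0`. -/
theorem hemitropic_block_posDef_iff (μ₀ α₀ lam₀ μ₂ α₂ lam₂ κ₀ ν₀ δ₀ : ℝ) :
    (∀ p : M3 × M3, p ≠ 0 →
        0 < finner p.1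
              ((((2 * μ₀) • sym0 + (2 * α₀) • skewM + (3 * lam₀ + 2 * μ₀) • volP) p.1) +
                (((2 * κ₀) • sym0 + (2 * ν₀) • skewM + (3 * δ₀ + 2 * κ₀) • volP) p.2)) +
            finner p.2
              ((((2 * κ₀) • sym0 + (2 * ν₀) • skewM + (3 * δ₀ + 2 * κ₀) • volP) p.1) +
                (((2 * μ₂) • sym0 + (2 * α₂) • skewM + (3 * lam₂ + 2 * μ₂) • volP) p.2))) ↔
      (0 < μ₀ ∧ 0 < α₀ ∧ 0 < lam₀ + (2 / 3) * μ₀ ∧ 0 < μ₀ * μ₂ - κ₀ ^ 2 ∧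
        0 < α₀ * α₂ - ν₀ ^ 2 ∧
        0 < (lam₂ + (2 / 3) * μ₂) * (lam₀ + (2 / 3) * μ₀) - (δ₀ + (2 / 3) * κ₀) ^ 2) := by
  simp only [hemitropic_eq_sum_cartanProj, ← frobeniusForm_apply,
    frobeniusForm.block_eq_sum_blockQuad isSymm_frobeniusForm finner_cartanProj_right]
  rw [frobeniusForm.sum_blockQuad_pos_iff isSymm_frobeniusForm (fun _ => finner_self_pos)
    sum_cartanProj_apply exists_cartanProj_ne_zero]
  exact cartanCoeff_conditions_iff μ₀ α₀ lam₀ μ₂ α₂ lam₂ κ₀ ν₀ δ₀
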